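/- Let r₁ < ⋯ < r_k be positive integers, S = ⟨r₁,…,r_k⟩, d = gcd(r₁,…,r_k), and let n > r_k² with gcd(n,d) = 1 and dn ∈ S. Set M_n = ⟨n, n+r₁,…,n+r_k⟩. Then Ap(M_n; n) = {i + m_S(i)·n : i ∈ Ap(S; dn)}, where m_S(i) denotes the minimum factorization length of i in S. -/

import Mathlib

open scoped Classical

/-- Membership in the additive submonoid of `ℕ` generated by `r 0, …, r (k-1)`. -/
def memGen {k : ℕ} (r : Fin k → ℕ) (a : ℕ) : Prop :=
  ∃ z : Fin k → ℕ, a = ∑ i, z i * r i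

/-- The Apéry set `Ap(S; x) = {m ∈ S : m - x ∉ S}` (subtraction in `ℤ`,
encoded by the guard `x ≤ m`). -/
def aperySet {k : ℕ} (r : Fin k → ℕ) (x : ℕ) : Set ℕ :=
  {m | memGen r m ∧ ¬(x ≤ m ∧ memGen r (m - x))}

/-- The set of factorization lengths of `a` in the monoid generated by `r`. -/
def lenSet {k : ℕ} (r : Fin k → ℕ) (a : ℕ) : Set ℕ :=
  {ℓ | ∃ z : Fin k → ℕ, a = ∑ i, z i * r i ∧ ℓ = ∑ i, z i}

/-- The minimum factorization length of `a` in the monoid generated by `r`. -/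
noncomputable def minLen {k : ℕ} (r : Fin k → ℕ) (a : ℕ) : ℕ :=
  sInf (lenSet r a)

/-- The generators `n, n + r 0, …, n + r (k-1)` of the shifted monoid `M_n`. -/
def shiftGen {k : ℕ} (n : ℕ) (r : Fin k → ℕ) : Fin (k + 1) → ℕ :=
  Fin.cons n (fun i => n + r i)

/-- The genus: the number of gaps of the monoid generated by `r`. -/
noncomputable def genus {k : ℕ} (r : Fin k → ℕ) : ℕ :=
  Set.ncard {m : ℕ | ¬ memGen r m}

/-- The Frobenius number: the largest gap of the monoid generated by `r`. -/
noncomputable def frob {k : ℕ} (r : Fin k → ℕ) : ℕ :=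
  sSup {m : ℕ | ¬ memGen r m}

/-- The set of pseudo-Frobenius numbers of the monoid generated by `r`. -/
def pseudoFrob {k : ℕ} (r : Fin k → ℕ) : Set ℕ :=
  {m | ¬ memGen r m ∧ ∀ x : ℕ, memGen r x → 0 < x → memGen r (m + x)}

/-!
Write `R = r (Fin.last k)`. Every element of `M_n` is `i + L n` with `i ∈ S` and `m_S(i) ≤ L`,
so `m ∈ Ap(M_n; n)` iff moreover `L ≤ m_S(i)` for every decomposition `m = i + L n`, `i ∈ S`.
By pigeonhole on prefix sums modulo `R`, a minimal factorization uses fewer than `R` generators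
other than `R`, so `R m_S(i) ≤ i + R²`; as also `i ≤ R m_S(i)`, the hypothesis `n > R²` makes
`m_S` strictly increasing along `i, i + n, i + 2n, …` inside `S`. Hence subtracting `dn` from `i`
while staying in `S` preserves `m_S(i) ≤ L` and ends in `Ap(S; dn)`, where the second condition
forces `m_S(i) = L`. Conversely, since `d` divides all of `S` and is prime to `n`, an element `i`
of `Ap(S; dn)` has no `i - tn ∈ S` with `t > 0`.
-/

theorem List.exists_sublist_ne_nil_dvd_sum_map {α : Type*} (l : List α) (f : α → ℕ) {R : ℕ}
    (hR : 0 < R) (hl : R ≤ l.length) :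
    ∃ t : List α, t.Sublist l ∧ t ≠ [] ∧ R ∣ (t.map f).sum := by
  have hmaps : ∀ i ∈ Finset.range (R + 1), ((l.take i).map f).sum % R ∈ Finset.range R :=
    fun _ _ => Finset.mem_range.mpr (Nat.mod_lt _ hR)
  obtain ⟨i, hi, j, hj, hij, hmod⟩ :=
    Finset.exists_ne_map_eq_of_card_lt_of_maps_to (by simp) hmaps
  wlog hlt : i < j generalizing i j
  · exact this j hj i hi hij.symm hmod.symm (by omega)
  rw [Finset.mem_range] at hj
  refine ⟨(l.take j).drop i, (List.drop_sublist _ _).trans (List.take_sublist _ _), ?_, ?_⟩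
  · simp [← List.length_eq_zero_iff]; omega
  · have hsplit : ((l.take j).map f).sum
        = ((l.take i).map f).sum + (((l.take j).drop i).map f).sum := by
      conv_lhs => rw [← List.take_append_drop i (l.take j)]
      rw [List.take_take, min_eq_left hlt.le, List.map_append, List.sum_append]
    have hmod' : ((l.take i).map f).sum + 0
        ≡ ((l.take i).map f).sum + (((l.take j).drop i).map f).sum [MOD R] := by
      rw [add_zero, ← hsplit]; exact hmod
    exact (Nat.modEq_zero_iff_dvd).mp (hmod'.add_left_cancel' _).symm

theorem Multiset.exists_le_ne_zero_dvd_sum_map {α : Type*} (s : Multiset α) (f : α → ℕ)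
    {R : ℕ} (hR : 0 < R) (hs : R ≤ Multiset.card s) :
    ∃ t ≤ s, t ≠ 0 ∧ R ∣ (t.map f).sum := by
  induction s using Quotient.inductionOn with
  | h l =>
    obtain ⟨t, hsub, hne, hdvd⟩ := l.exists_sublist_ne_nil_dvd_sum_map f hR (by simpa using hs)
    exact ⟨t, Multiset.coe_le.mpr hsub.subperm, by simpa using hne, by simpa using hdvd⟩

theorem exists_le_sum_pos_dvd {ι : Type*} [Fintype ι] (w f : ι → ℕ) {R : ℕ} (hR : 0 < R)
    (hw : R ≤ ∑ i, w i) :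
    ∃ y ≤ w, 0 < ∑ i, y i ∧ R ∣ ∑ i, y i * f i := by
  set s : Multiset ι := ∑ i, Multiset.replicate (w i) i
  have hcount : ∀ i, s.count i = w i := fun i => by
    simp [s, Multiset.count_sum', Multiset.count_replicate]
  obtain ⟨t, hts, ht0, hdvd⟩ :=
    s.exists_le_ne_zero_dvd_sum_map f hR (by simpa [s, Multiset.card_sum] using hw)
  refine ⟨fun i => t.count i, fun i => hcount i ▸ Multiset.count_le_of_le i hts, ?_, ?_⟩
  · rw [Multiset.sum_count_eq_card fun a _ => Finset.mem_univ a]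
    exact Multiset.card_pos.mpr ht0
  · rwa [Finset.sum_multiset_map_count, Finset.sum_subset (Finset.subset_univ _)
      fun i _ hi => by simp [Multiset.count_eq_zero.mpr (by simpa using hi)]] at hdvd

section Factorizations

variable {k : ℕ} {r : Fin k → ℕ}

theorem memGen_add {a b : ℕ} (ha : memGen r a) (hb : memGen r b) : memGen r (a + b) := by
  obtain ⟨x, rfl⟩ := ha
  obtain ⟨y, rfl⟩ := hb
  exact ⟨x + y, by simp [add_mul, Finset.sum_add_distrib]⟩

theorem memGen_mul (t : ℕ) {a : ℕ} (ha : memGen r a) : memGen r (t * a) := by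
  obtain ⟨x, rfl⟩ := ha
  exact ⟨t • x, by simp [Finset.mul_sum, mul_assoc]⟩

theorem dvd_of_memGen {d a : ℕ} (hd : ∀ j, d ∣ r j) (ha : memGen r a) : d ∣ a := by
  obtain ⟨z, rfl⟩ := ha
  exact Finset.dvd_sum fun j _ => (hd j).mul_left _

theorem exists_sum_eq_minLen {a : ℕ} (ha : memGen r a) :
    ∃ z : Fin k → ℕ, a = ∑ j, z j * r j ∧ ∑ j, z j = minLen r a := by
  obtain ⟨z, hz⟩ := ha
  obtain ⟨z, hz, hlen⟩ := Nat.sInf_mem (s := lenSet r a) ⟨_, z, hz, rfl⟩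
  exact ⟨z, hz, hlen.symm⟩

theorem minLen_le_sum {a : ℕ} (z : Fin k → ℕ) (hz : a = ∑ j, z j * r j) :
    minLen r a ≤ ∑ j, z j :=
  Nat.sInf_le ⟨z, hz, rfl⟩

theorem sum_mul_shiftGen (n : ℕ) (z : Fin (k + 1) → ℕ) :
    ∑ j, z j * shiftGen n r j =
      (z 0 + ∑ j : Fin k, z j.succ) * n + ∑ j : Fin k, z j.succ * r j := by
  simp only [Fin.sum_univ_succ, shiftGen, Fin.cons_zero, Fin.cons_succ, mul_add,
    Finset.sum_add_distrib, add_mul, Finset.sum_mul]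
  ring

theorem memGen_shiftGen_iff {n m : ℕ} :
    memGen (shiftGen n r) m ↔ ∃ i L, m = i + L * n ∧ memGen r i ∧ minLen r i ≤ L := by
  constructor
  · rintro ⟨z, rfl⟩
    refine ⟨∑ j : Fin k, z j.succ * r j, z 0 + ∑ j : Fin k, z j.succ,
      by rw [sum_mul_shiftGen]; ring, ⟨_, rfl⟩,
      (minLen_le_sum _ rfl).trans (Nat.le_add_left _ _)⟩
  · rintro ⟨i, L, rfl, hi, hL⟩
    obtain ⟨z, hz, hlen⟩ := exists_sum_eq_minLen hi
    refine ⟨Fin.cons (L - minLen r i) z, ?_⟩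
    simp only [sum_mul_shiftGen, Fin.cons_zero, Fin.cons_succ, ← hz, hlen,
      Nat.sub_add_cancel hL]
    ring

theorem mem_aperySet_shiftGen_iff {n m : ℕ} :
    m ∈ aperySet (shiftGen n r) n ↔
      (∃ i L, m = i + L * n ∧ memGen r i ∧ minLen r i ≤ L) ∧
        ∀ i L, m = i + L * n → memGen r i → L ≤ minLen r i := by
  simp only [aperySet, Set.mem_ofPred_eq, memGen_shiftGen_iff]
  refine and_congr_right fun _ => ⟨fun h i L hm hi => ?_, ?_⟩
  · by_contra! hlt
    obtain ⟨L, rfl⟩ := Nat.exists_eq_add_of_lt hlt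
    have hm' : m = i + (minLen r i + L) * n + n := by rw [hm]; ring
    exact h ⟨by omega, i, minLen r i + L, by omega, hi, le_self_add⟩
  · rintro h ⟨hnm, i, L, hm, hi, hL⟩
    have := h i (L + 1) (by rw [add_mul]; omega) hi
    omega

theorem eq_zero_of_mem_aperySet {d n i j t : ℕ} (hd : ∀ l, d ∣ r l)
    (hnd : Nat.Coprime n d) (hdn : memGen r (d * n)) (hi : i ∈ aperySet r (d * n))
    (hj : memGen r j) (hij : i = j + t * n) : t = 0 := by
  obtain ⟨s, rfl⟩ : d ∣ t := hnd.symm.dvd_of_dvd_mul_right <|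
    (Nat.dvd_add_right (dvd_of_memGen hd hj)).mp (hij ▸ dvd_of_memGen hd hi.1)
  rcases s with _ | s
  · rfl
  have hi' : i = j + s * (d * n) + d * n := by rw [hij]; ring
  refine absurd ⟨by omega, ?_⟩ hi.2
  rw [show i - d * n = j + s * (d * n) by omega]
  exact memGen_add hj (memGen_mul s hdn)

end Factorizations

section MinLenBounds

variable {k : ℕ} {r : Fin (k + 1) → ℕ}

theorem le_mul_minLen (hr : Monotone r) {a : ℕ} (ha : memGen r a) :
    a ≤ r (Fin.last k) * minLen r a := by
  obtain ⟨z, rfl, hlen⟩ := exists_sum_eq_minLen ha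
  rw [← hlen, Finset.mul_sum]
  exact Finset.sum_le_sum fun j _ => (Nat.mul_le_mul_left _ (hr j.le_last)).trans_eq (mul_comm _ _)

/- Otherwise some nonempty part of the small generators sums to `c * r (Fin.last k)` with `c`
smaller than its size; trading it for `c` copies of `r (Fin.last k)` shortens the factorization. -/
theorem sum_castSucc_lt_of_sum_eq_minLen (hr : StrictMono r) (hR : 0 < r (Fin.last k))
    {a : ℕ} (z : Fin (k + 1) → ℕ) (hz : a = ∑ j, z j * r j)
    (hlen : ∑ j, z j = minLen r a) :
    ∑ j : Fin k, z j.castSucc < r (Fin.last k) := by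
  by_contra! hge
  obtain ⟨y, hyz, hy0, c, hc⟩ :=
    exists_le_sum_pos_dvd (fun j : Fin k => z j.castSucc) (fun j => r j.castSucc) hR hge
  have hsub (g : Fin k → ℕ) :
      ∑ j, (z j.castSucc - y j) * g j + ∑ j, y j * g j = ∑ j : Fin k, z j.castSucc * g j := by
    rw [← Finset.sum_add_distrib]
    exact Finset.sum_congr rfl fun j _ => by rw [← add_mul, Nat.sub_add_cancel (hyz j)]
  have hc_lt : c < ∑ j, y j := by
    refine Nat.lt_of_mul_lt_mul_left (a := r (Fin.last k)) ?_
    rw [← hc, mul_comm, Finset.sum_mul]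
    obtain ⟨j, -, hj⟩ := Finset.sum_pos_iff.mp hy0
    have hlt : ∀ j : Fin k, r j.castSucc < r (Fin.last k) := fun j => hr j.castSucc_lt_last
    refine Finset.sum_lt_sum (fun j _ => ?_) ⟨j, Finset.mem_univ _, ?_⟩
    · exact Nat.mul_le_mul_left _ (hlt j).le
    · exact Nat.mul_lt_mul_of_pos_left (hlt j) hj
  set z' : Fin (k + 1) → ℕ := Fin.snoc (fun j => z j.castSucc - y j) (z (Fin.last k) + c)
  have hval : a = ∑ j, z' j * r j := by
    have := hsub fun j => r j.castSucc
    simp only [z', hz, Fin.sum_univ_castSucc, Fin.snoc_castSucc, Fin.snoc_last] at this ⊢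
    linarith
  have hshorter : ∑ j, z' j < ∑ j, z j := by
    have := hsub 1
    simp only [Pi.one_apply, mul_one] at this
    simp only [z', Fin.sum_univ_castSucc, Fin.snoc_castSucc, Fin.snoc_last]
    omega
  exact absurd (minLen_le_sum z' hval) (by omega)

theorem mul_minLen_le (hr : StrictMono r) {a : ℕ} (ha : memGen r a) :
    r (Fin.last k) * minLen r a ≤ a + r (Fin.last k) ^ 2 := by
  rcases (r (Fin.last k)).eq_zero_or_pos with hR | hR
  · simp [hR]
  obtain ⟨z, hz, hlen⟩ := exists_sum_eq_minLen ha
  have hsmall := sum_castSucc_lt_of_sum_eq_minLen hr hR z hz hlen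
  have hlast : z (Fin.last k) * r (Fin.last k) ≤ a := by
    rw [hz, Fin.sum_univ_castSucc]
    exact Nat.le_add_left _ _
  rw [← hlen, Fin.sum_univ_castSucc, mul_add, sq, mul_comm _ (z _)]
  have := Nat.mul_le_mul_left (r (Fin.last k)) hsmall.le
  omega

theorem minLen_lt_minLen_add (hr : StrictMono r) {i q : ℕ} (hi : memGen r i)
    (hiq : memGen r (i + q)) (hq : r (Fin.last k) ^ 2 < q) : minLen r i < minLen r (i + q) :=
  Nat.lt_of_mul_lt_mul_left (a := r (Fin.last k)) <| calc
    _ ≤ i + r (Fin.last k) ^ 2 := mul_minLen_le hr hi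
    _ < i + q := by omega
    _ ≤ _ := le_mul_minLen hr.monotone hiq

end MinLenBounds

section Apery

variable {k : ℕ} {r : Fin (k + 1) → ℕ}

theorem exists_mem_aperySet_add_mul (hr : StrictMono r) {d n : ℕ}
    (hdn : r (Fin.last k) ^ 2 < d * n) {i L : ℕ} (hi : memGen r i) (hL : minLen r i ≤ L) :
    ∃ i' L', i + L * n = i' + L' * n ∧ i' ∈ aperySet r (d * n) ∧ minLen r i' ≤ L' := by
  induction i using Nat.strong_induction_on generalizing L with
  | _ i ih =>
    by_cases hAp : i ∈ aperySet r (d * n)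
    · exact ⟨i, L, rfl, hAp, hL⟩
    obtain ⟨hle, hj⟩ : d * n ≤ i ∧ memGen r (i - d * n) := by
      simpa [aperySet, hi] using hAp
    have hlt : minLen r (i - d * n) < minLen r i := by
      have hi' : memGen r (i - d * n + d * n) := by rwa [Nat.sub_add_cancel hle]
      simpa [Nat.sub_add_cancel hle] using minLen_lt_minLen_add hr hj hi' hdn
    obtain ⟨i', L', heq, hi', hL'⟩ :=
      ih (i - d * n) (by omega) hj (L := L + d) (by omega)
    exact ⟨i', L', by rw [← heq, add_mul]; omega, hi', hL'⟩

theorem le_minLen_of_mem_aperySet (hr : StrictMono r) {d n i j L : ℕ}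
    (hn : r (Fin.last k) ^ 2 < n) (hd : ∀ l, d ∣ r l) (hnd : Nat.Coprime n d)
    (hdn : memGen r (d * n)) (hi : i ∈ aperySet r (d * n)) (hj : memGen r j)
    (h : i + minLen r i * n = j + L * n) : L ≤ minLen r j := by
  rcases le_or_gt L (minLen r i) with hle | hlt
  · obtain ⟨t, ht⟩ := Nat.exists_eq_add_of_le hle
    have hj' : j = i + t * n := by rw [ht, add_mul] at h; omega
    rcases t.eq_zero_or_pos with rfl | ht0
    · simp only [zero_mul, add_zero] at hj'
      subst hj'
      omega
    · have hq : r (Fin.last k) ^ 2 < t * n := hn.trans_le (Nat.le_mul_of_pos_left n ht0)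
      have := minLen_lt_minLen_add hr hi.1 (hj' ▸ hj) hq
      rw [← hj'] at this
      omega
  · obtain ⟨t, rfl⟩ := Nat.exists_eq_add_of_lt hlt
    have := eq_zero_of_mem_aperySet hd hnd hdn hi hj (t := t + 1) (by rw [add_mul] at h; linarith)
    omega

end Apery

/-- For `r₁ < ⋯ < r_k` positive, `S = ⟨r₁,…,r_k⟩`, `d = gcd(r₁,…,r_k)`,
`n > r_k²`, `gcd(n,d) = 1`, `dn ∈ S`, and `M_n = ⟨n, n+r₁,…,n+r_k⟩`:
`Ap(M_n; n) = {i + m_S(i)·n : i ∈ Ap(S; dn)}`. -/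
theorem apery_shifted {k : ℕ} (r : Fin (k + 1) → ℕ)
    (hmono : StrictMono r) (hpos : 0 < r 0)
    (d : ℕ) (hd : d = Finset.univ.gcd r)
    (n : ℕ) (hn : n > (r (Fin.last k)) ^ 2)
    (hgcd : Nat.gcd n d = 1) (hdn : memGen r (d * n)) :
    aperySet (shiftGen n r) n = (fun i => i + minLen r i * n) '' aperySet r (d * n) := by
  have hd_dvd : ∀ j, d ∣ r j := fun j => hd ▸ Finset.gcd_dvd (Finset.mem_univ j)
  have hdn_gt : r (Fin.last k) ^ 2 < d * n :=
    hn.trans_le (Nat.le_mul_of_pos_left n (Nat.pos_of_dvd_of_pos (hd_dvd 0) hpos))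
  ext m
  rw [mem_aperySet_shiftGen_iff]
  constructor
  · rintro ⟨⟨i, L, rfl, hi, hL⟩, hmin⟩
    obtain ⟨i', L', heq, hi', hL'⟩ := exists_mem_aperySet_add_mul hmono hdn_gt hi hL
    refine ⟨i', hi', ?_⟩
    show i' + minLen r i' * n = i + L * n
    rw [heq, le_antisymm hL' (hmin i' L' heq hi'.1)]
  · rintro ⟨i, hi, rfl⟩
    exact ⟨⟨i, _, rfl, hi.1, le_rfl⟩,
      fun j L h hj => le_minLen_of_mem_aperySet hmono hn hd_dvd hgcd hdn hi hj h⟩
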